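/- Let p be an odd prime, E the elliptic curve y² = x(1-x)(x-p) over Q_p, F = Q_p(E), and v a discrete valuation on F with v(1-x) > 0. Then 1-x is a square in the completion F_v. -/

import Mathlib

/-!
Write `e = 1 - x`, so that the curve reads `y² = e (1 - e) ((1 - p) - e)`. A `ℤ`-valued
valuation of `ℚ_p` is trivial on `1 + pℤ_p`, whose elements have `2^n`-th roots for every `n`,
hence by Fermat on all of `ℤ_p^×`: in particular on `2` and on a square root `s ∈ 1 + pℤ_p`
of `1 - p`. So `v(2) = 0` on `F_v`, and since `v(e) > 0`, Newton's iteration for the square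
root converges from `1` for `1 - e` and for `1 - e / s²`.
Then `e = y² / ((1 - e) s² (1 - e / s²))` is a square.
-/

open Filter Topology
open scoped WithZero

lemma WithZero.eq_one_of_forall_exists_pow_two_pow_eq {x : ℤᵐ⁰} (hx : x ≠ 0)
    (h : ∀ n : ℕ, ∃ y, y ^ 2 ^ n = x) : x = 1 := by
  obtain ⟨a, rfl⟩ := WithZero.ne_zero_iff_exists.mp hx
  obtain ⟨y, hy⟩ := h a.toAdd.natAbs
  have hy0 : y ≠ 0 := by rintro rfl; simp at hy
  obtain ⟨b, rfl⟩ := WithZero.ne_zero_iff_exists.mp hy0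
  rw [← WithZero.coe_pow, WithZero.coe_inj] at hy
  have hdvd : ((2 ^ a.toAdd.natAbs : ℕ) : ℤ) ∣ a.toAdd :=
    Dvd.intro _ (by rw [← nsmul_eq_mul, ← toAdd_pow, hy])
  have ha : a.toAdd = 0 :=
    Int.eq_zero_of_dvd_of_natAbs_lt_natAbs hdvd (by simpa using Nat.lt_two_pow_self)
  simp [toAdd_eq_zero.mp ha]

namespace PadicInt

variable {p : ℕ} [Fact p.Prime]

lemma isUnit_two (hp : p ≠ 2) : IsUnit (2 : ℤ_[p]) := by
  simpa using isUnit_iff.mpr <| (norm_natCast_eq_one_iff (p := p) (n := 2)).mpr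
    ((Nat.coprime_primes Fact.out Nat.prime_two).mpr hp)

open Polynomial in
lemma exists_sq_eq_of_norm_sub_one_lt_one (hp : p ≠ 2) {b : ℤ_[p]} (hb : ‖b - 1‖ < 1) :
    ∃ r : ℤ_[p], ‖r - 1‖ < 1 ∧ r ^ 2 = b := by
  have hderiv : ‖aeval (1 : ℤ_[p]) (derivative (X ^ 2 - C b))‖ = 1 := by
    simpa [derivative_X_pow, one_add_one_eq_two] using isUnit_iff.mp (isUnit_two hp)
  obtain ⟨r, hr, hr1, -⟩ := hensels_lemma (F := X ^ 2 - C b) (a := 1)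
    (by rw [hderiv]; simpa [norm_sub_rev] using hb)
  exact ⟨r, hderiv ▸ hr1, by simpa [sub_eq_zero] using hr⟩

lemma exists_pow_two_pow_eq_of_norm_sub_one_lt_one (hp : p ≠ 2) {b : ℤ_[p]} (hb : ‖b - 1‖ < 1)
    (n : ℕ) : ∃ r : ℤ_[p], ‖r - 1‖ < 1 ∧ r ^ 2 ^ n = b := by
  induction n with
  | zero => exact ⟨b, hb, pow_one b⟩
  | succ n ih =>
    obtain ⟨c, hc, rfl⟩ := ih
    obtain ⟨r, hr, rfl⟩ := exists_sq_eq_of_norm_sub_one_lt_one hp hc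
    exact ⟨r, hr, by rw [← pow_mul, ← pow_succ']⟩

lemma norm_pow_sub_one_sub_one_lt_one {u : ℤ_[p]} (hu : IsUnit u) :
    ‖u ^ (p - 1) - 1‖ < 1 := by
  rw [← mem_nonunits, ← IsLocalRing.mem_maximalIdeal, ← ker_toZMod, RingHom.mem_ker, map_sub,
    map_pow, map_one, ZMod.pow_card_sub_one_eq_one (hu.map toZMod).ne_zero, sub_self]

lemma valuation_eq_one_of_norm_sub_one_lt_one (hp : p ≠ 2) (w : Valuation ℚ_[p] ℤᵐ⁰)
    {b : ℤ_[p]} (hb : ‖b - 1‖ < 1) : w b = 1 := by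
  refine WithZero.eq_one_of_forall_exists_pow_two_pow_eq ?_ fun n => ?_
  · rw [w.ne_zero_iff]
    rintro h
    simp [PadicInt.coe_eq_zero.mp h] at hb
  · obtain ⟨r, -, rfl⟩ := exists_pow_two_pow_eq_of_norm_sub_one_lt_one hp hb n
    exact ⟨w r, by push_cast; rw [map_pow]⟩

lemma valuation_eq_one_of_isUnit (hp : p ≠ 2) (w : Valuation ℚ_[p] ℤᵐ⁰) {u : ℤ_[p]}
    (hu : IsUnit u) : w u = 1 := by
  have h := valuation_eq_one_of_norm_sub_one_lt_one hp w (norm_pow_sub_one_sub_one_lt_one hu)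
  push_cast at h
  rwa [map_pow, pow_eq_one_iff_left (Nat.sub_ne_zero_of_lt (Fact.out : p.Prime).one_lt)] at h

end PadicInt

section SqrtNewton

variable {K : Type*} [Field K]

def sqrtNewton (u w : K) : K := (w ^ 2 + u) / (2 * w)

variable {Γ₀ : Type*} [LinearOrderedCommGroupWithZero Γ₀] (v : Valuation K Γ₀)

lemma Valuation.sqrtNewton_spec (h2 : v 2 = 1) {u w : K} (hw : v w = 1)
    (hwu : v (w ^ 2 - u) < 1) :
    v (sqrtNewton u w) = 1 ∧ v (sqrtNewton u w - w) = v (w ^ 2 - u) ∧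
      v (sqrtNewton u w ^ 2 - u) = v (w ^ 2 - u) ^ 2 := by
  have h2w : v (2 * w) = 1 := by rw [map_mul, h2, hw, one_mul]
  have hw0 : w ≠ 0 := v.ne_zero_iff.mp (by simp [hw])
  have h20 : (2 : K) ≠ 0 := v.ne_zero_iff.mp (by simp [h2])
  have hsum : v (w ^ 2 + u) = 1 := by
    rw [show w ^ 2 + u = 2 * w * w - (w ^ 2 - u) by ring, sub_eq_add_neg,
      v.map_add_eq_of_lt_left (by rwa [v.map_neg, map_mul, h2w, hw, one_mul]), map_mul, h2w, hw,
      one_mul]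
  refine ⟨by rw [sqrtNewton, map_div₀, hsum, h2w, div_one], ?_, ?_⟩
  · rw [show sqrtNewton u w - w = -(w ^ 2 - u) / (2 * w) by
      rw [sqrtNewton]; field_simp; ring, map_div₀, v.map_neg, h2w, div_one]
  · rw [show sqrtNewton u w ^ 2 - u = (w ^ 2 - u) ^ 2 / (2 * w) ^ 2 by
      rw [sqrtNewton]; field_simp; ring, map_div₀, map_pow, map_pow, h2w, one_pow, div_one]

lemma Valuation.iterate_sqrtNewton_spec (h2 : v 2 = 1) {u : K} (hu : v (u - 1) < 1) (n : ℕ) :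
    v ((sqrtNewton u)^[n] 1) = 1 ∧
      v (((sqrtNewton u)^[n] 1) ^ 2 - u) ≤ v (u - 1) ^ (n + 1) := by
  induction n with
  | zero => simpa using (v.map_sub_swap 1 u).le
  | succ n ih =>
    obtain ⟨hw, hwu⟩ := ih
    have hlt : v (((sqrtNewton u)^[n] 1) ^ 2 - u) < 1 :=
      hwu.trans_lt (pow_lt_one₀ zero_le hu n.succ_ne_zero)
    obtain ⟨hw', -, hw'u⟩ := v.sqrtNewton_spec h2 hw hlt
    rw [Function.iterate_succ_apply', hw'u]
    refine ⟨hw', (pow_le_pow_left₀ zero_le hwu 2).trans ?_⟩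
    rw [← pow_mul]
    exact pow_le_pow_right_of_le_one' hu.le (by omega)

end SqrtNewton

section Valued

variable {K Γ₀ : Type*} [LinearOrderedCommGroupWithZero Γ₀] [MulArchimedean Γ₀]

section Ring

variable [Ring K] [Valued K Γ₀]

lemma Valued.tendsto_zero_of_le_pow {ι : Type*} {l : Filter ι} {f : ι → K} {n : ι → ℕ}
    (hn : Tendsto n l atTop) {γ : Γ₀} (hγ : γ < 1) (hf : ∀ i, Valued.v (f i) ≤ γ ^ n i) :
    Tendsto f l (𝓝 0) := by
  rw [(Valued.hasBasis_nhds_zero K Γ₀).tendsto_right_iff]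
  intro δ _
  obtain ⟨N, hN⟩ := exists_pow_lt₀ hγ (Units.map (MonoidWithZeroHom.ValueGroup₀.embedding
    (f := .ofClass (Valued.v : Valuation K Γ₀))) δ)
  filter_upwards [hn.eventually_ge_atTop N] with i hi
  rw [Valuation.restrict_lt_iff_lt_embedding]
  exact ((hf i).trans (pow_le_pow_right_of_le_one' hγ.le hi)).trans_lt hN

lemma Valued.cauchySeq_of_le_pow {z : ℕ → K} {γ : Γ₀} (hγ : γ < 1)
    (hz : ∀ n, Valued.v (z (n + 1) - z n) ≤ γ ^ n) : CauchySeq z := by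
  have hle : ∀ n k, Valued.v (z (n + k) - z n) ≤ γ ^ n := by
    intro n k
    induction k with
    | zero => simp
    | succ k ih =>
      rw [← add_assoc, ← sub_add_sub_cancel _ (z (n + k))]
      exact (Valued.v.map_add _ _).trans
        (max_le ((hz _).trans (pow_le_pow_right_of_le_one' hγ.le (by omega))) ih)
  rw [cauchySeq_iff_tendsto, uniformity_eq_comap_nhds_zero, tendsto_comap_iff]
  refine Valued.tendsto_zero_of_le_pow (n := fun q : ℕ × ℕ => min q.1 q.2)
    (tendsto_atTop_atTop_of_monotone (fun _ _ h => min_le_min h.1 h.2) fun N => ⟨(N, N), by simp⟩)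
    hγ fun ⟨m, n⟩ => ?_
  rcases le_total m n with h | h
  · obtain ⟨k, rfl⟩ := Nat.exists_eq_add_of_le h
    simpa [h] using hle m k
  · obtain ⟨k, rfl⟩ := Nat.exists_eq_add_of_le h
    simpa [h, Valuation.map_sub_swap] using hle n k

end Ring

variable [Field K] [Valued K Γ₀] [CompleteSpace K]

lemma Valued.isSquare_of_v_sub_one_lt_one (h2 : Valued.v (2 : K) = 1) {u : K}
    (hu : Valued.v (u - 1) < 1) : IsSquare u := by
  set z : ℕ → K := fun n => (sqrtNewton u)^[n] 1
  have hspec := Valued.v.iterate_sqrtNewton_spec h2 hu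
  have hz : ∀ n, Valued.v (z (n + 1) - z n) ≤ Valued.v (u - 1) ^ n := fun n => by
    obtain ⟨hw, hwu⟩ := hspec n
    rw [show z (n + 1) = sqrtNewton u (z n) from Function.iterate_succ_apply' _ _ _,
      (Valued.v.sqrtNewton_spec h2 hw (hwu.trans_lt (pow_lt_one₀ zero_le hu n.succ_ne_zero))).2.1]
    exact hwu.trans (pow_le_pow_right_of_le_one' hu.le n.le_succ)
  obtain ⟨L, hL⟩ := cauchySeq_tendsto_of_complete (Valued.cauchySeq_of_le_pow hu hz)
  have hsq : Tendsto (fun n => z n ^ 2 - u) atTop (𝓝 0) :=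
    Valued.tendsto_zero_of_le_pow tendsto_id hu fun n =>
      (hspec n).2.trans (pow_le_pow_right_of_le_one' hu.le n.le_succ)
  have hLu : L ^ 2 - u = 0 := tendsto_nhds_unique ((hL.pow 2).sub tendsto_const_nhds) hsq
  exact ⟨L, by rw [← sq]; exact (sub_eq_zero.mp hLu).symm⟩

lemma Valued.isSquare_of_sq_eq_mul_one_sub_mul_sq_sub (h2 : Valued.v (2 : K) = 1) {e a y : K}
    (he : Valued.v e < 1) (ha : Valued.v a = 1) (hy : y ^ 2 = e * (1 - e) * (a ^ 2 - e)) :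
    IsSquare e := by
  have ha0 : a ≠ 0 := Valued.v.ne_zero_iff.mp (by simp [ha])
  have hea : Valued.v (e / a ^ 2) < 1 := by rwa [map_div₀, map_pow, ha, one_pow, div_one]
  have hsq : ∀ {c : K}, Valued.v c < 1 → IsSquare (1 - c) := fun hc =>
    Valued.isSquare_of_v_sub_one_lt_one h2 (by rwa [sub_sub_cancel_left, Valuation.map_neg])
  have hfactor : a ^ 2 - e = a ^ 2 * (1 - e / a ^ 2) := by field_simp
  have hne : (1 - e) * (a ^ 2 - e) ≠ 0 := by
    have h1 : ∀ {c : K}, Valued.v c < 1 → 1 - c ≠ 0 := fun hc =>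
      Valued.v.ne_zero_iff.mp (by simp [Valuation.map_one_sub_of_lt _ hc])
    rw [hfactor]
    exact mul_ne_zero (h1 he) (mul_ne_zero (pow_ne_zero 2 ha0) (h1 hea))
  rw [show e = y ^ 2 / ((1 - e) * (a ^ 2 - e)) by rw [hy, mul_assoc, mul_div_cancel_right₀ _ hne]]
  exact (IsSquare.sq y).div ((hsq he).mul (hfactor ▸ (IsSquare.sq a).mul (hsq hea)))

end Valued

theorem one_sub_x_square_in_completion_of_pos_val_general
    (p : ℕ) [Fact p.Prime] (hp : Odd p)
    (F : Type) [Field F] [Algebra (RatFunc ℚ_[p]) F]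
    (y : F)
    (hy : y ^ 2 = algebraMap (RatFunc ℚ_[p]) F
      (RatFunc.X * (1 - RatFunc.X) * (RatFunc.X - RatFunc.C (p : ℚ_[p]))))
    (v : Valuation F (WithZero (Multiplicative ℤ)))
    (Fv : Type) [Field Fv] [Valued Fv (WithZero (Multiplicative ℤ))] [CompleteSpace Fv]
    [Algebra F Fv]
    (hcompat : ∀ f : F, Valued.v (algebraMap F Fv f) = v f)
    (hpos : v (algebraMap (RatFunc ℚ_[p]) F (1 - RatFunc.X)) < 1) :
    IsSquare (algebraMap F Fv (algebraMap (RatFunc ℚ_[p]) F (1 - RatFunc.X))) := by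
  have hp2 : p ≠ 2 := by rintro rfl; exact Nat.not_even_iff_odd.mpr hp even_two
  set φ : ℚ_[p] →+* Fv := (algebraMap F Fv).comp
    ((algebraMap (RatFunc ℚ_[p]) F).comp (algebraMap ℚ_[p] (RatFunc ℚ_[p])))
  obtain ⟨s, hs1, hs⟩ := PadicInt.exists_sq_eq_of_norm_sub_one_lt_one hp2 (b := 1 - p)
    (by simpa using (PadicInt.norm_lt_one_iff_dvd (p : ℤ_[p])).mpr dvd_rfl)
  have hv2 : Valued.v (2 : Fv) = 1 := by
    have h := PadicInt.valuation_eq_one_of_isUnit hp2 (Valued.v.comap φ) (PadicInt.isUnit_two hp2)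
    rwa [show ((2 : ℤ_[p]) : ℚ_[p]) = 2 by norm_cast, Valuation.comap_apply, map_ofNat] at h
  have hvs : Valued.v (φ s) = 1 :=
    PadicInt.valuation_eq_one_of_norm_sub_one_lt_one hp2 (Valued.v.comap φ) hs1
  set e := algebraMap F Fv (algebraMap (RatFunc ℚ_[p]) F (1 - RatFunc.X))
  have hcurve : algebraMap F Fv y ^ 2 = e * (1 - e) * (φ s ^ 2 - e) := by
    have hs' : φ s ^ 2 = 1 - p := by
      rw [← map_pow, ← PadicInt.coe_pow, hs]; simp [φ]
    rw [hs', ← map_pow, hy, ← RatFunc.algebraMap_eq_C]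
    simp only [e, map_mul, map_sub, map_one, map_natCast]
    ring
  exact Valued.isSquare_of_sq_eq_mul_one_sub_mul_sq_sub hv2 (by rwa [hcompat]) hvs hcurve

/-- Let `p` be an odd prime, `E` the elliptic curve `y² = x(1-x)(x-p)` over `ℚ_p`,
`F = ℚ_p(E)` its function field (the quadratic extension of `ℚ_p(x)` generated by `y`),
and `v` a nontrivial rank-one discrete valuation on `F` (value group `ℤ`; here written
multiplicatively, with values in `ℤₘ₀ = WithZero (Multiplicative ℤ)` and `v` surjective),
with completion `F_v` (a complete valued field containing `F` as a dense subfield, whose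
valuation extends `v`).  If `v(1-x) > 0` (multiplicatively: `v(1-x) < 1`), then `1 - x`
is a square in `F_v`. -/
theorem one_sub_x_square_in_completion_of_pos_val
    (p : ℕ) [Fact p.Prime] (hp : Odd p)
    (F : Type) [Field F] [Algebra (RatFunc ℚ_[p]) F]
    (y : F)
    (hy : y ^ 2 = algebraMap (RatFunc ℚ_[p]) F
      (RatFunc.X * (1 - RatFunc.X) * (RatFunc.X - RatFunc.C (p : ℚ_[p]))))
    (hgen : Algebra.adjoin (RatFunc ℚ_[p]) {y} = ⊤)
    (hdeg : Module.finrank (RatFunc ℚ_[p]) F = 2)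
    (v : Valuation F (WithZero (Multiplicative ℤ)))
    (hv : Function.Surjective v)
    (Fv : Type) [Field Fv] [Valued Fv (WithZero (Multiplicative ℤ))] [CompleteSpace Fv]
    [Algebra F Fv]
    (hcompat : ∀ f : F, Valued.v (algebraMap F Fv f) = v f)
    (hdense : DenseRange (algebraMap F Fv))
    (hpos : v (algebraMap (RatFunc ℚ_[p]) F (1 - RatFunc.X)) < 1) :
    IsSquare (algebraMap F Fv (algebraMap (RatFunc ℚ_[p]) F (1 - RatFunc.X))) :=
  one_sub_x_square_in_completion_of_pos_val_general p hp F y hy v Fv hcompat hpos
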